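/- Suppose Ψ: 𝔻 → ℂ and φ: 𝔻 → 𝔻 are holomorphic and the weighted composition operator W_{Ψ,φ}f = Ψ·(f∘φ) on H²₂(𝔻) is complex symmetric with conjugation J, (Jf)(z) = conj(f(conj z)). Then φ(z) = a₀ + a₁·q(z)/p(z) and Ψ(z) = a₂·p(z), where a₀ = φ(0), a₁ = φ′(0), a₂ = 3888·Ψ(0), p(z) = (2/243)∑_{n≥0}((n+1)/(n+2)⁵)a₀ⁿzⁿ, and q(z) = (1/32)∑_{n≥1}(n(n+1)/(n+2)⁵)a₀^{n−1}zⁿ. -/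

import Mathlib

/-- `kfun u v = K_{conj u}(v) = ∑ ((n+1)/(n+2)⁵)(u·v)ⁿ`. -/
noncomputable def kfun (u v : ℂ) : ℂ :=
  ∑' n : ℕ, (((n : ℂ) + 1) / ((n : ℂ) + 2) ^ 5) * (u * v) ^ n

/-- `p(z) = (2/243) ∑_{n≥0} ((n+1)/(n+2)⁵) a₀ⁿ zⁿ`. -/
noncomputable def pfun (a₀ z : ℂ) : ℂ :=
  (2 / 243) * ∑' n : ℕ, (((n : ℂ) + 1) / ((n : ℂ) + 2) ^ 5) * a₀ ^ n * z ^ n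

/-- `q(z) = (1/32) ∑_{n≥1} (n(n+1)/(n+2)⁵) a₀^{n-1} zⁿ`. -/
noncomputable def qfun (a₀ z : ℂ) : ℂ :=
  (1 / 32) * ∑' n : ℕ, ((n : ℂ) * ((n : ℂ) + 1) / ((n : ℂ) + 2) ^ 5) * a₀ ^ (n - 1) * z ^ n


/-! Putting `w = 0` in the symmetry identity and using `K_w(0) = 1/32` gives
`Ψ = 32 Ψ(0) K_{φ(0)} = 3888 Ψ(0) p`. Substituting this back, `Ψ(0)` cancels and leaves
`K_{φ(0)}(z) K_w(φ z) = K_{φ(0)}(w) K_{φ(w)}(z)`; differentiating in `w` at `0`, with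
`∂_u K(u, z) = 32 q(u, z)`, gives `p(z) (φ(z) - φ(0)) = φ'(0) q(z)`. Finally `p` has no zeros in
the disc, because its constant coefficient `1/32` dominates the sum `≤ 2/81` of the absolute
values of the others. -/

open Metric Filter Topology

theorem summable_natCast_mul_pow_sub_one {r : ℝ} (hr : ‖r‖ < 1) :
    Summable fun n : ℕ => (n : ℝ) * r ^ (n - 1) := by
  refine (summable_nat_add_iff 1).mp ?_
  simpa [add_mul] using ((summable_pow_mul_geometric_of_norm_lt_one 1 hr).add
    (summable_geometric_of_norm_lt_one hr))

theorem hasDerivAt_tsum_mul_pow {a : ℕ → ℂ} {C : ℝ} (ha : ∀ n, ‖a n‖ ≤ C) {x : ℂ}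
    (hx : ‖x‖ < 1) :
    HasDerivAt (fun z => ∑' n, a n * z ^ n) (∑' n, a n * (n * x ^ (n - 1))) x := by
  obtain ⟨r, hxr, hr1⟩ := exists_between hx
  have hr0 : 0 < r := (norm_nonneg x).trans_lt hxr
  refine hasDerivAt_tsum_of_isPreconnected
    ((summable_natCast_mul_pow_sub_one (r := r) (by rwa [Real.norm_of_nonneg hr0.le])).mul_left C)
    isOpen_ball (convex_ball 0 r).isPreconnected
    (fun n y _ => (hasDerivAt_pow n y).const_mul (a n)) (fun n y hy => ?_)
    (mem_ball_self hr0) ?_ (mem_ball_zero_iff.2 hxr)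
  · have hy : ‖y‖ ≤ r := (mem_ball_zero_iff.1 hy).le
    rw [norm_mul, norm_mul, norm_pow, Complex.norm_natCast]
    gcongr
    · exact (norm_nonneg _).trans (ha 0)
    · exact ha n
  · refine summable_of_ne_finset_zero (s := {0}) fun n hn => ?_
    simp [zero_pow (Finset.notMem_singleton.1 hn)]

theorem tsum_mul_pow_zero (a : ℕ → ℂ) : ∑' n, a n * 0 ^ n = a 0 := by
  rw [tsum_eq_single 0 fun n hn => by simp [zero_pow hn]]
  simp

theorem tsum_mul_natCast_mul_zero_pow (a : ℕ → ℂ) :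
    ∑' n, a n * (n * 0 ^ (n - 1)) = a 1 := by
  rw [tsum_eq_single 1 fun n hn => ?_]
  · simp
  · rcases n with _ | _ | n
    · simp
    · exact absurd rfl hn
    · simp

theorem tsum_mul_pow_ne_zero {a : ℕ → ℂ} (hs : Summable fun n => ‖a (n + 1)‖)
    (htail : ∑' n, ‖a (n + 1)‖ < ‖a 0‖) {t : ℂ} (ht : ‖t‖ ≤ 1) :
    ∑' n, a n * t ^ n ≠ 0 := by
  have hbound : ∀ n, ‖a (n + 1) * t ^ (n + 1)‖ ≤ ‖a (n + 1)‖ := fun n => by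
    rw [norm_mul, norm_pow]
    exact mul_le_of_le_one_right (norm_nonneg _) (pow_le_one₀ (norm_nonneg t) ht)
  have hsum : Summable fun n => a (n + 1) * t ^ (n + 1) := .of_norm_bounded hs hbound
  have htail_le : ‖∑' n, a (n + 1) * t ^ (n + 1)‖ ≤ ∑' n, ‖a (n + 1)‖ :=
    (norm_tsum_le_tsum_norm hsum.norm).trans (hsum.norm.tsum_le_tsum hbound hs)
  have hsum' : Summable fun n => a n * t ^ n :=
    (summable_nat_add_iff (f := fun n => a n * t ^ n) 1).mp hsum
  rw [hsum'.tsum_eq_zero_add, pow_zero, mul_one]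
  intro h
  rw [add_eq_zero_iff_eq_neg.1 h, norm_neg] at htail
  linarith

theorem sum_range_le_of_le_sub {f g : ℕ → ℝ} (hg : ∀ n, 0 ≤ g n)
    (h : ∀ n, f n ≤ g n - g (n + 1)) (N : ℕ) : ∑ n ∈ Finset.range N, f n ≤ g 0 := by
  have := Finset.sum_le_sum fun n (_ : n ∈ Finset.range N) => h n
  rw [Finset.sum_range_sub'] at this
  linarith [hg N]

theorem summable_of_le_sub {f g : ℕ → ℝ} (hf : ∀ n, 0 ≤ f n) (hg : ∀ n, 0 ≤ g n)
    (h : ∀ n, f n ≤ g n - g (n + 1)) : Summable f :=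
  summable_of_sum_range_le hf (sum_range_le_of_le_sub hg h)

theorem tsum_le_of_le_sub {f g : ℕ → ℝ} (hf : ∀ n, 0 ≤ f n) (hg : ∀ n, 0 ≤ g n)
    (h : ∀ n, f n ≤ g n - g (n + 1)) : ∑' n, f n ≤ g 0 :=
  Real.tsum_le_of_sum_range_le hf (sum_range_le_of_le_sub hg h)

noncomputable def kcoeff (n : ℕ) : ℝ := (n + 1) / (n + 2) ^ 5

theorem kcoeff_nonneg (n : ℕ) : 0 ≤ kcoeff n := by unfold kcoeff; positivity

theorem kcoeff_le_one (n : ℕ) : kcoeff n ≤ 1 := by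
  unfold kcoeff
  rw [div_le_one (by positivity)]
  nlinarith [le_self_pow₀ (by linarith [n.cast_nonneg (α := ℝ)] : (1 : ℝ) ≤ n + 2)
    (by norm_num : 5 ≠ 0)]

theorem norm_kcoeff (n : ℕ) : ‖(kcoeff n : ℂ)‖ = kcoeff n := by
  rw [Complex.norm_real, Real.norm_of_nonneg (kcoeff_nonneg n)]

-- The majorant telescopes to `2/81`; `4/81` makes it sharp at `n = 0`.
theorem kcoeff_succ_le (n : ℕ) :
    kcoeff (n + 1) ≤ 4 / 81 / ((n : ℝ) + 2) - 4 / 81 / ((n + 1 : ℕ) + 2) := by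
  have hn : (0 : ℝ) ≤ n := n.cast_nonneg
  have key : 81 * ((n : ℝ) + 2) ^ 2 ≤ 4 * ((n : ℝ) + 3) ^ 4 := by
    nlinarith [mul_nonneg hn (by linarith : (0 : ℝ) ≤ 2 * n + 3)]
  unfold kcoeff
  push_cast
  rw [div_sub_div _ _ (by positivity) (by positivity), div_le_div_iff₀ (by positivity)
    (by positivity)]
  nlinarith [mul_le_mul_of_nonneg_left key (by linarith : (0 : ℝ) ≤ n + 3)]

theorem tsum_kcoeff_succ_lt :
    Summable (fun n => kcoeff (n + 1)) ∧ ∑' n, kcoeff (n + 1) < kcoeff 0 := by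
  have hg : ∀ n : ℕ, 0 ≤ 4 / 81 / ((n : ℝ) + 2) := fun n => by positivity
  refine ⟨summable_of_le_sub (fun n => kcoeff_nonneg _) hg kcoeff_succ_le, ?_⟩
  refine (tsum_le_of_le_sub (fun n => kcoeff_nonneg _) hg kcoeff_succ_le).trans_lt ?_
  norm_num [kcoeff]

theorem kfun_eq_tsum (u v : ℂ) : kfun u v = ∑' n, (kcoeff n : ℂ) * (u * v) ^ n := by
  simp only [kfun, kcoeff]
  push_cast
  rfl

theorem kfun_comm (u v : ℂ) : kfun u v = kfun v u := by
  rw [kfun, kfun, mul_comm u v]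

theorem kfun_zero_right (u : ℂ) : kfun u 0 = 1 / 32 := by
  rw [kfun_eq_tsum, mul_zero, tsum_mul_pow_zero]
  norm_num [kcoeff]

theorem kfun_eq_pfun (a z : ℂ) : kfun a z = 243 / 2 * pfun a z := by
  rw [pfun, ← mul_assoc, div_mul_div_cancel₀ (by norm_num), div_self (by norm_num), one_mul]
  exact tsum_congr fun n => by rw [mul_pow, mul_assoc]

theorem kfun_ne_zero {u v : ℂ} (h : ‖u * v‖ ≤ 1) : kfun u v ≠ 0 := by
  obtain ⟨hs, hlt⟩ := tsum_kcoeff_succ_lt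
  rw [kfun_eq_tsum]
  exact tsum_mul_pow_ne_zero (by simpa only [norm_kcoeff] using hs)
    (by simpa only [norm_kcoeff] using hlt) h

theorem pfun_ne_zero {a z : ℂ} (ha : ‖a‖ < 1) (hz : ‖z‖ < 1) : pfun a z ≠ 0 := by
  have hk := kfun_ne_zero (u := a) (v := z) (by
    rw [norm_mul]; exact mul_le_one₀ ha.le (norm_nonneg z) hz.le)
  rw [kfun_eq_pfun] at hk
  exact right_ne_zero_of_mul hk

theorem mul_qfun_eq_tsum (x v : ℂ) :
    32 * qfun x v = ∑' n, ((kcoeff n : ℂ) * v ^ n) * (n * x ^ (n - 1)) := by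
  rw [qfun, ← mul_assoc, mul_one_div_cancel (by norm_num), one_mul]
  exact tsum_congr fun n => by simp only [kcoeff]; push_cast; ring

theorem qfun_zero_left (v : ℂ) : qfun 0 v = v / 3888 := by
  have h := mul_qfun_eq_tsum 0 v
  rw [tsum_mul_natCast_mul_zero_pow] at h
  norm_num [kcoeff] at h
  linear_combination h / 32

theorem hasDerivAt_kfun_left {v x : ℂ} (hv : ‖v‖ ≤ 1) (hx : ‖x‖ < 1) :
    HasDerivAt (fun u => kfun u v) (32 * qfun x v) x := by
  have hbound : ∀ n, ‖(kcoeff n : ℂ) * v ^ n‖ ≤ 1 := fun n => by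
    rw [norm_mul, norm_pow, norm_kcoeff]
    exact mul_le_one₀ (kcoeff_le_one n) (by positivity) (pow_le_one₀ (norm_nonneg v) hv)
  rw [mul_qfun_eq_tsum]
  convert hasDerivAt_tsum_mul_pow hbound hx using 2 with u
  rw [kfun_eq_tsum]
  exact tsum_congr fun n => by ring

theorem pfun_mul_sub_eq_deriv_mul_qfun {φ : ℂ → ℂ} {z : ℂ} (hφ : DifferentiableAt ℂ φ 0) (hφ0 : ‖φ 0‖ < 1)
    (hz : ‖z‖ < 1) (hφz : ‖φ z‖ ≤ 1)
    (hker : ∀ᶠ w in 𝓝 0, kfun (φ 0) z * kfun w (φ z) = kfun (φ 0) w * kfun (φ w) z) :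
    pfun (φ 0) z * (φ z - φ 0) = deriv φ 0 * qfun (φ 0) z := by
  have h0 : ‖(0 : ℂ)‖ < 1 := by simp
  have hL := (hasDerivAt_kfun_left hφz h0).const_mul (kfun (φ 0) z)
  have hR₁ : HasDerivAt (fun w => kfun (φ 0) w) (32 * qfun 0 (φ 0)) 0 := by
    simpa only [kfun_comm (φ 0)] using hasDerivAt_kfun_left hφ0.le h0
  have hR : HasDerivAt (fun w => kfun (φ 0) w * kfun (φ w) z)
      (32 * qfun 0 (φ 0) * kfun (φ 0) z + kfun (φ 0) 0 * (32 * qfun (φ 0) z * deriv φ 0)) 0 :=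
    hR₁.mul ((hasDerivAt_kfun_left hz.le hφ0).comp 0 hφ.hasDerivAt)
  have h := hL.unique (hR.congr_of_eventuallyEq hker)
  rw [qfun_zero_left, qfun_zero_left, kfun_zero_right, kfun_eq_pfun] at h
  linear_combination h

theorem stmt18_general (Ψ φ : ℂ → ℂ)
    (hmap : Set.MapsTo φ (Metric.ball (0 : ℂ) 1) (Metric.ball (0 : ℂ) 1))
    (hφ : DifferentiableOn ℂ φ (Metric.ball (0 : ℂ) 1))
    (hΨ0 : Ψ 0 ≠ 0)
    (hsym : ∀ z ∈ Metric.ball (0 : ℂ) 1, ∀ w ∈ Metric.ball (0 : ℂ) 1,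
      Ψ z * kfun w (φ z) = Ψ w * kfun (φ w) z) :
    ∀ z ∈ Metric.ball (0 : ℂ) 1,
      φ z = φ 0 + deriv φ 0 * qfun (φ 0) z / pfun (φ 0) z ∧
      Ψ z = 3888 * Ψ 0 * pfun (φ 0) z := by
  have h0 : (0 : ℂ) ∈ ball (0 : ℂ) 1 := mem_ball_self one_pos
  have hΨ_eq : ∀ y ∈ ball (0 : ℂ) 1, Ψ y = 32 * Ψ 0 * kfun (φ 0) y := fun y hy => by
    have h := hsym y hy 0 h0
    rw [kfun_comm 0, kfun_zero_right] at h
    linear_combination 32 * h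
  have hker : ∀ z ∈ ball (0 : ℂ) 1, ∀ w ∈ ball (0 : ℂ) 1,
      kfun (φ 0) z * kfun w (φ z) = kfun (φ 0) w * kfun (φ w) z := fun z hz w hw => by
    have h := hsym z hz w hw
    rw [hΨ_eq z hz, hΨ_eq w hw] at h
    exact mul_left_cancel₀ (mul_ne_zero (by norm_num : (32 : ℂ) ≠ 0) hΨ0)
      (by linear_combination h)
  intro z hz
  refine ⟨?_, by rw [hΨ_eq z hz, kfun_eq_pfun]; ring⟩
  have hφ0 : ‖φ 0‖ < 1 := mem_ball_zero_iff.1 (hmap h0)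
  have hz' : ‖z‖ < 1 := mem_ball_zero_iff.1 hz
  have key := pfun_mul_sub_eq_deriv_mul_qfun (hφ.differentiableAt (isOpen_ball.mem_nhds h0)) hφ0 hz'
    (mem_ball_zero_iff.1 (hmap hz)).le
    (eventually_of_mem (isOpen_ball.mem_nhds h0) (hker z hz))
  have hp := pfun_ne_zero hφ0 hz'
  field_simp
  linear_combination key

/-- If the weighted composition operator `W_{Ψ,φ}` on `H²₂(𝔻)` is complex symmetric
with the conjugation `J` — equivalently
`Ψ(z)K_{conj w}(φ(z)) = Ψ(w)K_{conj(φ(w))}(z)` for all `w, z ∈ 𝔻` — then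
`φ(z) = a₀ + a₁ q(z)/p(z)` and `Ψ(z) = a₂ p(z)`, where `a₀ = φ(0)`, `a₁ = φ′(0)`,
`a₂ = 3888 Ψ(0)`. (Here `Ψ(0) ≠ 0` rules out the degenerate operator `W = 0`.) -/
theorem stmt18 (Ψ φ : ℂ → ℂ)
    (hmap : Set.MapsTo φ (Metric.ball (0 : ℂ) 1) (Metric.ball (0 : ℂ) 1))
    (hφ : DifferentiableOn ℂ φ (Metric.ball (0 : ℂ) 1))
    (hΨ : DifferentiableOn ℂ Ψ (Metric.ball (0 : ℂ) 1))
    (hΨ0 : Ψ 0 ≠ 0)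
    (hsym : ∀ z ∈ Metric.ball (0 : ℂ) 1, ∀ w ∈ Metric.ball (0 : ℂ) 1,
      Ψ z * kfun w (φ z) = Ψ w * kfun (φ w) z) :
    ∀ z ∈ Metric.ball (0 : ℂ) 1,
      φ z = φ 0 + deriv φ 0 * qfun (φ 0) z / pfun (φ 0) z ∧
      Ψ z = 3888 * Ψ 0 * pfun (φ 0) z :=
  stmt18_general Ψ φ hmap hφ hΨ0 hsym
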